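/- arXiv:2510.09277 — 4 statements merged into one kernel-verified Lean document; each statement's English description precedes it below -/
import Mathlib

section
/- Let G be a finite group, S a p-subgroup of G (not necessarily Sylow), R a set of representatives of the G-conjugacy classes of elements of S, and B a ℤ-basis of the lattice of G-stable virtual characters of S. Let X be the square matrix with entries X_{ψ,s} = ψ(s) for ψ ∈ B, s ∈ R. Then det(X · conj(X)^T) is a (rational) integer. -/
open CategoryTheory

section Aux

open Module LinearMap IntermediateField

private lemma multiset_map_replicate_sum' {α β : Type} [AddCommMonoid β] (t : Finset α)
    (d : α → ℕ) (g : α → β) :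
    ((∑ μ ∈ t, Multiset.replicate (d μ) μ).map g).sum = ∑ μ ∈ t, (d μ) • g μ := by
  classical
  induction t using Finset.induction with
  | empty => simp
  | @insert a t h ih =>
    rw [Finset.sum_insert h, Finset.sum_insert h, Multiset.map_add, Multiset.sum_add, ih,
      Multiset.map_replicate, Multiset.sum_replicate]

private lemma trace_pow_of_pow_eq_one' {V : Type} [AddCommGroup V] [Module ℂ V]
    [FiniteDimensional ℂ V] (f : Module.End ℂ V) (N : ℕ) (hf : f ^ N = 1) :
    ∃ m : Multiset ℂ, (∀ l ∈ m, l ^ N = 1) ∧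
      ∀ k : ℕ, LinearMap.trace ℂ V (f ^ k) = (m.map (· ^ k)).sum := by
  set P := f.maxGenEigenspace with hP
  have hind : iSupIndep P := f.independent_maxGenEigenspace
  have htop : ⨆ μ, P μ = ⊤ := f.iSup_maxGenEigenspace_eq_top
  have hInt : DirectSum.IsInternal P :=
    (DirectSum.isInternal_submodule_iff_iSupIndep_and_iSup_eq_top P).mpr ⟨hind, htop⟩
  have hfin : {μ | P μ ≠ ⊥}.Finite := WellFoundedGT.finite_ne_bot_of_iSupIndep hind
  refine ⟨∑ μ ∈ hfin.toFinset, Multiset.replicate (finrank ℂ (P μ)) μ, ?_, ?_⟩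
  · intro l hl
    rw [Multiset.mem_sum] at hl
    obtain ⟨μ, hμ, hlm⟩ := hl
    rw [Multiset.eq_of_mem_replicate hlm]
    rw [Set.Finite.mem_toFinset] at hμ
    have hev : f.HasEigenvalue μ := by
      refine Module.End.hasEigenvalue_of_hasGenEigenvalue (k := finrank ℂ V) ?_
      have hμ' : f.genEigenspace μ (finrank ℂ V) ≠ ⊥ := by
        rw [← f.maxGenEigenspace_eq_genEigenspace_finrank μ]; exact hμ
      exact hμ'
    obtain ⟨v, hv⟩ := hev.exists_hasEigenvector
    have h1 : (f ^ N) v = μ ^ N • v := hv.pow_apply N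
    rw [hf, Module.End.one_apply] at h1
    have h2 : (μ ^ N - 1) • v = 0 := by rw [sub_smul, one_smul, ← h1, sub_self]
    rcases smul_eq_zero.mp h2 with h | h
    · exact sub_eq_zero.mp h
    · exact absurd h hv.right
  · intro k
    have hMapsTo : ∀ μ, Set.MapsTo (f ^ k) (P μ) (P μ) := fun μ =>
      Module.End.mapsTo_maxGenEigenspace_of_comm ((Commute.refl f).pow_right k) μ
    rw [trace_eq_sum_trace_restrict' hInt hfin hMapsTo,
      multiset_map_replicate_sum']
    refine Finset.sum_congr rfl fun μ hμ => ?_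
    have hfP : ∀ x ∈ P μ, f x ∈ P μ := Module.End.mapsTo_maxGenEigenspace_of_comm rfl μ
    set g := f.restrict hfP with hg
    have hres : (f ^ k).restrict (hMapsTo μ) = g ^ k := by
      rw [hg, Module.End.pow_restrict k hfP]
    rw [hres]
    have hnil : IsNilpotent (g - algebraMap ℂ (Module.End ℂ (P μ)) μ) := by
      have h0 := f.isNilpotent_restrict_maxGenEigenspace_sub_algebraMap μ
      convert h0 using 2
      ext x; simp [hg]; rfl
    have key : ∀ j : ℕ, LinearMap.trace ℂ (P μ) (g ^ j) = (finrank ℂ (P μ)) • μ ^ j := by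
      intro j
      induction j with
      | zero => simp
      | succ j ih =>
        have hcomm : Commute (g ^ j) g := (Commute.refl g).pow_left j
        have h2 := LinearMap.trace_comp_eq_mul_of_commute_of_isNilpotent μ hcomm hnil
        rw [pow_succ, Module.End.mul_eq_comp, h2, ih, nsmul_eq_mul, nsmul_eq_mul]
        ring
    rw [key k]

private lemma char_multiset' {H : Type} [Group H] (A : FDRep ℂ H) (s : H) (N : ℕ)
    (hs : s ^ N = 1) :
    ∃ m : Multiset ℂ, (∀ l ∈ m, l ^ N = 1) ∧
      ∀ k : ℕ, A.character (s ^ k) = (m.map (· ^ k)).sum := by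
  have hf : (A.ρ s) ^ N = 1 := by rw [← map_pow, hs, map_one]
  obtain ⟨m, hm1, hm2⟩ := trace_pow_of_pow_eq_one' (A.ρ s) N hf
  refine ⟨m, hm1, fun k => ?_⟩
  have : A.character (s ^ k) = LinearMap.trace ℂ A ((A.ρ s) ^ k) := by
    rw [← map_pow]; rfl
  rw [this, hm2 k]

private lemma virtual_char_multiset' {H : Type} [Group H] (ψ : H → ℂ) (A C : FDRep ℂ H)
    (hψ : ψ = A.character - C.character) (s : H) (N : ℕ) (hs : s ^ N = 1) :
    ∃ m₁ m₂ : Multiset ℂ, (∀ l ∈ m₁, l ^ N = 1) ∧ (∀ l ∈ m₂, l ^ N = 1) ∧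
      ∀ k : ℕ, ψ (s ^ k) = (m₁.map (· ^ k)).sum - (m₂.map (· ^ k)).sum := by
  obtain ⟨m₁, h₁, h₁'⟩ := char_multiset' A s N hs
  obtain ⟨m₂, h₂, h₂'⟩ := char_multiset' C s N hs
  exact ⟨m₁, m₂, h₁, h₂, fun k => by rw [hψ]; simp [h₁' k, h₂' k]⟩

private lemma root_of_unity_isIntegral' {l : ℂ} {N : ℕ} (hN : N ≠ 0) (hl : l ^ N = 1) :
    IsIntegral ℤ l := by
  refine ⟨Polynomial.X ^ N - Polynomial.C 1, Polynomial.monic_X_pow_sub_C 1 hN, ?_⟩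
  simp [hl]

private lemma root_of_unity_conj' {l : ℂ} {N : ℕ} (hN : N ≠ 0) (hl : l ^ N = 1) :
    (starRingEnd ℂ) l = l ^ (N - 1) := by
  have habs : ‖l‖ ^ N = 1 := by rw [← norm_pow, hl, norm_one]
  have habs1 : ‖l‖ = 1 := by
    have h0 : (0:ℝ) ≤ ‖l‖ := norm_nonneg l
    have h1 : (0:ℝ) ≤ 1 := by norm_num
    have := (pow_left_strictMonoOn₀ (M₀ := ℝ) hN).eq_iff_eq (a := ‖l‖) (b := 1) h0 h1
    rw [one_pow] at this
    exact this.mp habs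
  have hmul : l * (starRingEnd ℂ) l = 1 := by
    rw [Complex.mul_conj, Complex.normSq_eq_norm_sq, habs1]; norm_num
  have hmul' : l * l ^ (N - 1) = 1 := by
    rw [← pow_succ', Nat.sub_add_cancel (Nat.one_le_iff_ne_zero.mpr hN), hl]
  have := eq_inv_of_mul_eq_one_right hmul
  rw [this, ← eq_inv_of_mul_eq_one_right hmul']

private lemma vc_conj' {H : Type} [Group H] (ψ : H → ℂ) (A C : FDRep ℂ H)
    (hψ : ψ = A.character - C.character) (s : H) (N : ℕ) (hN : N ≠ 0) (hs : s ^ N = 1) :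
    (starRingEnd ℂ) (ψ s) = ψ s⁻¹ := by
  obtain ⟨m₁, m₂, hm₁, hm₂, hsum⟩ := virtual_char_multiset' ψ A C hψ s N hs
  have h1 := hsum 1
  rw [pow_one] at h1
  have hinv : s⁻¹ = s ^ (N - 1) := by
    refine (eq_inv_of_mul_eq_one_left ?_).symm
    rw [← pow_succ, Nat.sub_add_cancel (Nat.one_le_iff_ne_zero.mpr hN), hs]
  rw [h1, map_sub, map_multiset_sum, map_multiset_sum, hinv, hsum (N - 1),
    Multiset.map_map, Multiset.map_map]
  congr 1
  · exact congrArg _ (Multiset.map_congr rfl fun l hl => by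
      simp only [Function.comp_apply, pow_one]
      exact root_of_unity_conj' hN (hm₁ l hl))
  · exact congrArg _ (Multiset.map_congr rfl fun l hl => by
      simp only [Function.comp_apply, pow_one]
      exact root_of_unity_conj' hN (hm₂ l hl))

private lemma vc_integral' {H : Type} [Group H] (ψ : H → ℂ) (A C : FDRep ℂ H)
    (hψ : ψ = A.character - C.character) (s : H) (N : ℕ) (hN : N ≠ 0) (hs : s ^ N = 1) :
    IsIntegral ℤ (ψ s) := by
  obtain ⟨m₁, m₂, hm₁, hm₂, hsum⟩ := virtual_char_multiset' ψ A C hψ s N hs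
  have h1 := hsum 1
  rw [pow_one] at h1
  rw [h1]
  have hsub : ∀ (m : Multiset ℂ), (∀ l ∈ m, l ^ N = 1) →
      (m.map (· ^ 1)).sum ∈ integralClosure ℤ ℂ := by
    intro m hm
    refine multiset_sum_mem _ fun x hx => ?_
    obtain ⟨l, hl, rfl⟩ := Multiset.mem_map.mp hx
    rw [pow_one]
    exact root_of_unity_isIntegral' hN (hm l hl)
  exact sub_mem (hsub m₁ hm₁) (hsub m₂ hm₂)

private lemma memL' {N : ℕ} {ζ : ℂ} (hζ : IsPrimitiveRoot ζ N) [NeZero N] {l : ℂ}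
    (hl : l ^ N = 1) : l ∈ adjoin ℚ {ζ} := by
  obtain ⟨a, -, ha⟩ := hζ.eq_pow_of_pow_eq_one hl
  exact ha ▸ pow_mem (mem_adjoin_simple_self ℚ ζ) a

private lemma sigma_pow' {N : ℕ} {ζ : ℂ} (hζ : IsPrimitiveRoot ζ N) [NeZero N]
    (σ : ↥(adjoin ℚ {ζ}) ≃ₐ[ℚ] ↥(adjoin ℚ {ζ})) :
    ∃ k, Nat.Coprime k N ∧ ∀ z : ↥(adjoin ℚ {ζ}), (z : ℂ) ^ N = 1 → σ z = z ^ k := by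
  set ζL : ↥(adjoin ℚ {ζ}) := ⟨ζ, mem_adjoin_simple_self ℚ ζ⟩ with hζL'
  have hζL : IsPrimitiveRoot ζL N := by
    rw [← IsPrimitiveRoot.coe_submonoidClass_iff (M := ℂ)]
    exact hζ
  have hσζ : IsPrimitiveRoot (σ ζL) N := hζL.map_of_injective σ.injective
  obtain ⟨k, hkN, hcop, hpow⟩ := hζL.isPrimitiveRoot_iff.mp hσζ
  refine ⟨k, hcop, fun z hz => ?_⟩
  have hzN : z ^ N = 1 := by
    ext; push_cast; exact hz
  obtain ⟨a, -, ha⟩ := hζL.eq_pow_of_pow_eq_one hzN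
  rw [← ha, map_pow, ← hpow, ← pow_mul, ← pow_mul, mul_comm a k]

private lemma vc_sigma' {N : ℕ} {ζ : ℂ} {H : Type} [Group H] (hζ : IsPrimitiveRoot ζ N)
    [NeZero N] (ψ : H → ℂ) (A C : FDRep ℂ H) (hψ : ψ = A.character - C.character)
    (s : H) (hs : s ^ N = 1)
    (σ : ↥(adjoin ℚ {ζ}) ≃ₐ[ℚ] ↥(adjoin ℚ {ζ})) (k : ℕ)
    (hk : ∀ z : ↥(adjoin ℚ {ζ}), (z : ℂ) ^ N = 1 → σ z = z ^ k) :
    ∃ (h1 : ψ s ∈ adjoin ℚ {ζ}),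
      ((σ ⟨ψ s, h1⟩ : ↥(adjoin ℚ {ζ})) : ℂ) = ψ (s ^ k) := by
  obtain ⟨m₁, m₂, hm₁, hm₂, hsum⟩ := virtual_char_multiset' ψ A C hψ s N hs
  let f₁ : {x // x ∈ m₁} → ↥(adjoin ℚ {ζ}) := fun x => ⟨x.1, memL' hζ (hm₁ x.1 x.2)⟩
  let f₂ : {x // x ∈ m₂} → ↥(adjoin ℚ {ζ}) := fun x => ⟨x.1, memL' hζ (hm₂ x.1 x.2)⟩
  set m₁L : Multiset ↥(adjoin ℚ {ζ}) := m₁.attach.map f₁ with hm₁L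
  set m₂L : Multiset ↥(adjoin ℚ {ζ}) := m₂.attach.map f₂ with hm₂L
  set w : ↥(adjoin ℚ {ζ}) := m₁L.sum - m₂L.sum with hw
  have csum : ∀ (j : ℕ),
      (((m₁L.map (· ^ j)).sum - (m₂L.map (· ^ j)).sum : ↥(adjoin ℚ {ζ})) : ℂ) = ψ (s ^ j) := by
    intro j
    push_cast
    rw [hsum j]
    congr 1
    · rw [hm₁L, Multiset.map_map, Multiset.map_map, ← Multiset.attach_map_val' m₁ (· ^ j)]
      exact congrArg _ (Multiset.map_congr rfl fun x _ => by simp [f₁])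
    · rw [hm₂L, Multiset.map_map, Multiset.map_map, ← Multiset.attach_map_val' m₂ (· ^ j)]
      exact congrArg _ (Multiset.map_congr rfl fun x _ => by simp [f₂])
  have cw : (w : ℂ) = ψ s := by
    have h := csum 1
    simpa only [pow_one, Multiset.map_id'] using h
  have h1 : ψ s ∈ adjoin ℚ {ζ} := cw ▸ w.2
  refine ⟨h1, ?_⟩
  have hww : (⟨ψ s, h1⟩ : ↥(adjoin ℚ {ζ})) = w := Subtype.ext cw.symm
  rw [hww, hw, map_sub, map_multiset_sum, map_multiset_sum]
  have e₁ : m₁L.map σ = m₁L.map (· ^ k) := by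
    refine Multiset.map_congr rfl fun z hz => ?_
    apply hk
    rw [hm₁L] at hz
    obtain ⟨x, -, rfl⟩ := Multiset.mem_map.mp hz
    exact hm₁ x.1 x.2
  have e₂ : m₂L.map σ = m₂L.map (· ^ k) := by
    refine Multiset.map_congr rfl fun z hz => ?_
    apply hk
    rw [hm₂L] at hz
    obtain ⟨x, -, rfl⟩ := Multiset.mem_map.mp hz
    exact hm₂ x.1 x.2
  rw [e₁, e₂]
  exact csum k

private lemma rat_of_fixed' (N : ℕ) (hN : N ≠ 0) (ζ : ℂ) (hζ : IsPrimitiveRoot ζ N)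
    (x : ℂ) (hx : x ∈ IntermediateField.adjoin ℚ {ζ})
    (hfix : ∀ σ : ↥(IntermediateField.adjoin ℚ {ζ}) ≃ₐ[ℚ] ↥(IntermediateField.adjoin ℚ {ζ}),
      σ ⟨x, hx⟩ = ⟨x, hx⟩) :
    ∃ q : ℚ, (q : ℂ) = x := by
  set L := IntermediateField.adjoin ℚ {ζ} with hL
  lift N to ℕ+ using Nat.pos_of_ne_zero hN with N' hN'
  have hζ' : IsPrimitiveRoot ζ (N' : ℕ) := hζ
  haveI : IsCyclotomicExtension {(N' : ℕ)} ℚ L := by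
    have hint : IsIntegral ℚ ζ := by
      refine ⟨Polynomial.X ^ (N' : ℕ) - Polynomial.C 1,
        Polynomial.monic_X_pow_sub_C 1 (by exact_mod_cast hN), ?_⟩
      simp [hζ'.pow_eq_one]
    have H := IntermediateField.adjoin_simple_toSubalgebra_of_isAlgebraic hint.isAlgebraic
    refine IsCyclotomicExtension.equiv _ _ _ (h := ?_) (.refl : ℚ⟮ζ⟯.toSubalgebra ≃ₐ[ℚ] _)
    rw [H]
    exact hζ'.adjoin_isCyclotomicExtension ℚ
  haveI : FiniteDimensional ℚ L := IsCyclotomicExtension.finiteDimensional {(N' : ℕ)} ℚ L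
  haveI : IsGalois ℚ L := IsCyclotomicExtension.isGalois {(N' : ℕ)} ℚ L
  have hmem : (⟨x, hx⟩ : L) ∈ IntermediateField.fixedField
      (IntermediateField.fixingSubgroup (⊥ : IntermediateField ℚ L)) := by
    intro g
    exact hfix g
  rw [IsGalois.fixedField_fixingSubgroup (⊥ : IntermediateField ℚ L)] at hmem
  rw [IntermediateField.mem_bot] at hmem
  obtain ⟨q, hq⟩ := hmem
  refine ⟨q, ?_⟩
  have := congrArg (algebraMap L ℂ) hq
  simpa using this

end Aux

open IntermediateField in
/-- Let `G` be a finite group, `S` a `p`-subgroup of `G` (not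
necessarily Sylow), `r 0, …, r (n-1)` representatives of the `G`-conjugacy classes of
elements of `S`, and `B` a ℤ-basis of the lattice of `G`-stable virtual characters of
`S`.  If `X i j = B i (r j)` then `det (X * Xᴴ)` is a (rational) integer. -/
theorem stmt_9 (G : Type) [Group G] [Finite G] (p : ℕ) [Fact p.Prime]
    (S : Subgroup G) (hS : IsPGroup p ↥S) (n : ℕ) (r : Fin n → ↥S)
    (hrep : ∀ s : ↥S, ∃ j, IsConj (s : G) (r j : G))
    (hdist : ∀ j k, j ≠ k → ¬ IsConj ((r j : G)) ((r k : G)))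
    (B : Fin n → (↥S → ℂ))
    (hBstable : ∀ i, (∃ A C : FDRep ℂ ↥S, B i = A.character - C.character) ∧
      ∀ s t : ↥S, IsConj (s : G) (t : G) → B i s = B i t)
    (hBbasis : ∀ ψ : ↥S → ℂ,
      ((∃ A C : FDRep ℂ ↥S, ψ = A.character - C.character) ∧
        ∀ s t : ↥S, IsConj (s : G) (t : G) → ψ s = ψ t) →
      ∃! c : Fin n → ℤ, ψ = fun s => ∑ i, (c i : ℂ) * B i s)
    (X : Matrix (Fin n) (Fin n) ℂ) (hX : ∀ i j, X i j = B i (r j)) :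
    ∃ k : ℤ, (X * X.conjTranspose).det = (k : ℂ) := by
  classical
  haveI : Fintype ↥S := Fintype.ofFinite _
  set N := Fintype.card ↥S with hNdef
  have hN : N ≠ 0 := Fintype.card_ne_zero
  haveI : NeZero N := ⟨hN⟩
  have hsN : ∀ s : ↥S, s ^ N = 1 := fun s => pow_card_eq_one
  choose A C hAC using fun i => (hBstable i).1
  set ζ : ℂ := Complex.exp (2 * Real.pi * Complex.I / N) with hζdef
  have hζ : IsPrimitiveRoot ζ N := Complex.isPrimitiveRoot_exp N hN
  -- complex conjugation on character values
  have hconj : ∀ i (s : ↥S), (starRingEnd ℂ) (B i s) = B i s⁻¹ :=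
    fun i s => vc_conj' (B i) (A i) (C i) (hAC i) s N hN (hsN s)
  have hXH : ∀ i j, X.conjTranspose j i = B i ((r j)⁻¹) := by
    intro i j
    rw [Matrix.conjTranspose_apply, hX i j]
    exact hconj i (r j)
  -- membership of character values in the cyclotomic field
  have hmem : ∀ i (s : ↥S), B i s ∈ adjoin ℚ {ζ} := fun i s =>
    (vc_sigma' hζ (B i) (A i) (C i) (hAC i) s (hsN s) AlgEquiv.refl 1
      (by intro z hz; simp)).1
  set XL : Matrix (Fin n) (Fin n) ↥(adjoin ℚ {ζ}) :=
    fun i j => ⟨B i (r j), hmem i (r j)⟩ with hXL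
  set YL : Matrix (Fin n) (Fin n) ↥(adjoin ℚ {ζ}) :=
    fun j i => ⟨B i ((r j)⁻¹), hmem i ((r j)⁻¹)⟩ with hYL
  set dL : ↥(adjoin ℚ {ζ}) := (XL * YL).det with hdL
  -- the coercion of dL is our determinant
  have hcoe : (dL : ℂ) = (X * X.conjTranspose).det := by
    have hmap : (X * X.conjTranspose) = (XL * YL).map (algebraMap ↥(adjoin ℚ {ζ}) ℂ) := by
      rw [Matrix.map_mul]
      congr 1
      · ext i j; rw [hX i j]; rfl
      · ext j i; rw [hXH i j]; rfl
    have h0 := RingHom.map_det (algebraMap ↥(adjoin ℚ {ζ}) ℂ) (XL * YL)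
    rw [RingHom.mapMatrix_apply] at h0
    rw [hmap, ← h0]
    rfl
  -- Galois invariance
  have hfix : ∀ σ : ↥(adjoin ℚ {ζ}) ≃ₐ[ℚ] ↥(adjoin ℚ {ζ}), σ dL = dL := by
    intro σ
    obtain ⟨k, hcop, hk⟩ := sigma_pow' hζ σ
    -- a modular inverse of k
    set k' := ((k : ZMod N)⁻¹).val with hk'def
    have hkk' : k * k' ≡ 1 [MOD N] := by
      refine (ZMod.natCast_eq_natCast_iff _ _ _).mp ?_
      push_cast
      rw [ZMod.natCast_zmod_val]
      exact ZMod.coe_mul_inv_eq_one k hcop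
    have hpowid : ∀ s : ↥S, s ^ (k * k') = s := by
      intro s
      conv_rhs => rw [← pow_one s]
      rw [pow_eq_pow_iff_modEq]
      exact hkk'.of_dvd orderOf_dvd_card
    -- the permutation induced by s ↦ s^k on conjugacy classes
    have hrepk : ∀ j, ∃ j', IsConj (((r j) ^ k : ↥S) : G) ((r j' : G)) :=
      fun j => hrep ((r j) ^ k)
    choose π hπ using hrepk
    have hcoepow : ∀ (s : ↥S) (m : ℕ), ((s ^ m : ↥S) : G) = (s : G) ^ m :=
      fun s m => by push_cast; rfl
    have hconjpow : ∀ (a b : G), IsConj a b → ∀ m : ℕ, IsConj (a ^ m) (b ^ m) := by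
      rintro a b ⟨c, hc⟩ m
      exact ⟨c, hc.pow_right m⟩
    have hπinj : Function.Injective π := by
      intro j j' he
      by_contra hne
      refine hdist j j' hne ?_
      have h1 : IsConj ((r j : G) ^ k) ((r j' : G) ^ k) := by
        have ha := hπ j
        have hb := hπ j'
        rw [he] at ha
        rw [hcoepow] at ha hb
        exact ha.trans hb.symm
      have h2 := hconjpow _ _ h1 k'
      rw [← pow_mul, ← pow_mul, ← hcoepow, ← hcoepow, hpowid, hpowid] at h2
      exact h2
    have hπbij : Function.Bijective π := Finite.injective_iff_bijective.mp hπinj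
    set e : Fin n ≃ Fin n := Equiv.ofBijective π hπbij with he
    -- action of σ on the matrices
    have hA1 : XL.map σ = XL.submatrix id e := by
      ext i j
      obtain ⟨h1, hs⟩ := vc_sigma' hζ (B i) (A i) (C i) (hAC i) (r j) (hsN _) σ k hk
      have hstab : B i ((r j) ^ k) = B i (r (π j)) := (hBstable i).2 _ _ (hπ j)
      show ((σ (XL i j) : ↥(adjoin ℚ {ζ})) : ℂ) = ((XL i (π j) : ↥(adjoin ℚ {ζ})) : ℂ)
      exact hs.trans hstab
    have hA2 : YL.map σ = YL.submatrix e id := by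
      ext j i
      obtain ⟨h1, hs⟩ := vc_sigma' hζ (B i) (A i) (C i) (hAC i) ((r j)⁻¹) (hsN _) σ k hk
      have hstab : B i (((r j)⁻¹) ^ k) = B i ((r (π j))⁻¹) := by
        refine (hBstable i).2 _ _ ?_
        have hinvpow : ((r j)⁻¹ : ↥S) ^ k = ((r j) ^ k)⁻¹ := (inv_pow _ _)
        rw [hinvpow]
        obtain ⟨c, hc⟩ := hπ j
        refine ⟨c, ?_⟩
        have := hc.inv_right
        convert this using 1 <;> push_cast <;> rfl
      show ((σ (YL j i) : ↥(adjoin ℚ {ζ})) : ℂ) = ((YL (π j) i : ↥(adjoin ℚ {ζ})) : ℂ)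
      exact hs.trans hstab
    -- σ fixes the determinant
    set σr : ↥(adjoin ℚ {ζ}) →+* ↥(adjoin ℚ {ζ}) := σ.toAlgHom.toRingHom with hσrdef
    have hA1' : XL.map σr = XL.submatrix id e := hA1
    have hA2' : YL.map σr = YL.submatrix e id := hA2
    have h0 := RingHom.map_det σr (XL * YL)
    rw [RingHom.mapMatrix_apply] at h0
    have hσr : σ dL = ((XL * YL).map σr).det := h0
    rw [hσr, Matrix.map_mul, hA1', hA2', Matrix.submatrix_mul_equiv, Matrix.submatrix_id_id]
  -- rationality
  obtain ⟨q, hq⟩ := rat_of_fixed' N hN ζ hζ (dL : ℂ) dL.2 (fun σ => hfix σ)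
  -- integrality
  have hintB : ∀ i (s : ↥S), IsIntegral ℤ (B i s) :=
    fun i s => vc_integral' (B i) (A i) (C i) (hAC i) s N hN (hsN s)
  have hint : IsIntegral ℤ ((X * X.conjTranspose).det) := by
    set XI : Matrix (Fin n) (Fin n) ↥(integralClosure ℤ ℂ) :=
      fun i j => ⟨B i (r j), hintB i (r j)⟩ with hXI
    set YI : Matrix (Fin n) (Fin n) ↥(integralClosure ℤ ℂ) :=
      fun j i => ⟨B i ((r j)⁻¹), hintB i ((r j)⁻¹)⟩ with hYI
    have hmap : (X * X.conjTranspose) = (XI * YI).map (algebraMap ↥(integralClosure ℤ ℂ) ℂ) := by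
      rw [Matrix.map_mul]
      congr 1
      · ext i j; rw [hX i j]; rfl
      · ext j i; rw [hXH i j]; rfl
    have h0 := RingHom.map_det (algebraMap ↥(integralClosure ℤ ℂ) ℂ) (XI * YI)
    rw [RingHom.mapMatrix_apply] at h0
    rw [hmap, ← h0]
    exact ((XI * YI).det).2
  rw [← hcoe, ← hq] at hint
  have hqint : IsIntegral ℤ q := by
    have : ((q : ℂ)) = algebraMap ℚ ℂ q := rfl
    rw [this] at hint
    exact (isIntegral_algebraMap_iff (algebraMap ℚ ℂ).injective).mp hint
  obtain ⟨z, hz⟩ := IsIntegrallyClosed.isIntegral_iff.mp hqint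
  refine ⟨z, ?_⟩
  rw [← hcoe, ← hq, ← hz]
  push_cast
  rfl
end

section
/- Let p be an odd prime and ε ∈ F_p^× an element such that −ε is not a square in F_p. Then the number of matrices [[a,b],[c,d]] in GL_2(F_p) satisfying a² + εb² + εc² + ε²d² = 0, counted up to scalar multiplication (i.e. in PGL_2(F_p)), equals (p+1)². -/
open Finset

section Aux
variable {p : ℕ} [Fact p.Prime]

lemma aniso (ε : ZMod p) (hns : ¬ ∃ x : ZMod p, x ^ 2 = -ε) {x y : ZMod p}
    (h : x ^ 2 + ε * y ^ 2 = 0) : x = 0 ∧ y = 0 := by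
  by_cases hy : y = 0
  · subst hy
    refine ⟨?_, rfl⟩
    have : x ^ 2 = 0 := by linear_combination h
    exact pow_eq_zero_iff (two_ne_zero) |>.mp this
  · exact absurd ⟨x / y, by field_simp; linear_combination h⟩ hns

lemma Tcard (hodd : Odd p) (ε : ZMod p) (hε : ε ≠ 0)
    (hns : ¬ ∃ x : ZMod p, x ^ 2 = -ε) {t : ZMod p} (ht : t ≠ 0) :
    (univ.filter (fun v : ZMod p × ZMod p => v.1 ^ 2 + ε * v.2 ^ 2 = t)).card = p + 1 := by
  classical
  set M : ZMod p → Finset (ZMod p × ZMod p) :=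
    fun s => univ.filter (fun v : ZMod p × ZMod p => v.1 ^ 2 + ε * v.2 ^ 2 = s) with hM
  -- every value is attained
  have hexists : ∀ s : ZMod p, ∃ v : ZMod p × ZMod p, v.1 ^ 2 + ε * v.2 ^ 2 = s := by
    intro s
    have hcard : Fintype.card (ZMod p) % 2 = 1 := by
      rw [ZMod.card]
      exact Nat.odd_iff.mp hodd
    obtain ⟨a, b, hab⟩ := FiniteField.exists_root_sum_quadratic
      (f := Polynomial.X ^ 2 - Polynomial.C s) (g := Polynomial.C ε * Polynomial.X ^ 2)
      (by rw [Polynomial.degree_X_pow_sub_C (by norm_num) s]; norm_cast) (by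
        rw [Polynomial.degree_C_mul hε, Polynomial.degree_X_pow]; norm_cast) hcard
    refine ⟨(a, b), ?_⟩
    simp only [Polynomial.eval_sub, Polynomial.eval_pow, Polynomial.eval_X,
      Polynomial.eval_C, Polynomial.eval_mul] at hab
    linear_combination hab
  -- all nonzero fibers have the same cardinality
  have hsame : ∀ s : ZMod p, s ≠ 0 → (M s).card = (M 1).card := by
    intro s hs
    obtain ⟨v, hv⟩ := hexists s
    refine (Finset.card_nbij'
      (i := fun u => ((v.1 * u.1 + ε * v.2 * u.2) / s, (v.1 * u.2 - v.2 * u.1) / s))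
      (j := fun w => (v.1 * w.1 - ε * v.2 * w.2, v.1 * w.2 + v.2 * w.1)) ?_ ?_ ?_ ?_)
    · intro u hu
      simp only [hM, Finset.mem_coe, mem_filter, mem_univ, true_and] at hu ⊢
      field_simp
      linear_combination (u.1 ^ 2 + ε * u.2 ^ 2) * hv + s * hu
    · intro w hw
      simp only [hM, Finset.mem_coe, mem_filter, mem_univ, true_and] at hw ⊢
      linear_combination (w.1 ^ 2 + ε * w.2 ^ 2) * hv + s * hw
    · intro u hu
      simp only [hM, Finset.mem_coe, mem_filter, mem_univ, true_and] at hu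
      have h1 : (v.1 * ((v.1 * u.1 + ε * v.2 * u.2) / s) - ε * v.2 * ((v.1 * u.2 - v.2 * u.1) / s))
          = u.1 := by field_simp; linear_combination u.1 * hv
      have h2 : (v.1 * ((v.1 * u.2 - v.2 * u.1) / s) + v.2 * ((v.1 * u.1 + ε * v.2 * u.2) / s))
          = u.2 := by field_simp; linear_combination u.2 * hv
      exact Prod.ext h1 h2
    · intro w hw
      simp only [hM, Finset.mem_coe, mem_filter, mem_univ, true_and] at hw
      have h1 : (v.1 * (v.1 * w.1 - ε * v.2 * w.2) + ε * v.2 * (v.1 * w.2 + v.2 * w.1)) / s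
          = w.1 := by field_simp; linear_combination w.1 * hv
      have h2 : (v.1 * (v.1 * w.2 + v.2 * w.1) - v.2 * (v.1 * w.1 - ε * v.2 * w.2)) / s
          = w.2 := by field_simp; linear_combination w.2 * hv
      exact Prod.ext h1 h2
  -- the zero fiber is a single point
  have hzero : (M 0).card = 1 := by
    rw [Finset.card_eq_one]
    refine ⟨(0, 0), ?_⟩
    ext v
    simp only [hM, mem_filter, mem_univ, true_and, mem_singleton]
    constructor
    · intro h
      obtain ⟨h1, h2⟩ := aniso ε hns h
      exact Prod.ext h1 h2
    · rintro rfl; ring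
  -- total count
  have htotal : ∑ s : ZMod p, (M s).card = p * p := by
    rw [← Finset.card_eq_sum_card_fiberwise (fun v _ => mem_univ (v.1 ^ 2 + ε * v.2 ^ 2))]
    simp [Finset.card_univ, ZMod.card]
  have hp2 : 2 ≤ p := (Fact.out : p.Prime).two_le
  have hkey : 1 + (p - 1) * (M 1).card = p * p := by
    rw [← htotal, ← Finset.sum_erase_add _ _ (mem_univ (0 : ZMod p)), hzero]
    rw [Finset.sum_congr rfl (fun s hs => hsame s (Finset.ne_of_mem_erase hs)),
      Finset.sum_const, smul_eq_mul]
    have : (univ.erase (0 : ZMod p)).card = p - 1 := by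
      rw [Finset.card_erase_of_mem (mem_univ _), Finset.card_univ, ZMod.card]
    rw [this, add_comm]
  have hM1 : (M 1).card = p + 1 := by
    obtain ⟨m, rfl⟩ : ∃ m, p = m + 2 := ⟨p - 2, by omega⟩
    have h1 : (m + 2 - 1) = m + 1 := by omega
    rw [h1] at hkey
    nlinarith [hkey]
  rw [show (univ.filter (fun v : ZMod p × ZMod p => v.1 ^ 2 + ε * v.2 ^ 2 = t)) = M t from rfl,
    hsame t ht, hM1]

lemma det_ne (ε : ZMod p) (hns : ¬ ∃ x : ZMod p, x ^ 2 = -ε) (hε : ε ≠ 0)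
    {a b c d : ZMod p}
    (hQ : a ^ 2 + ε * b ^ 2 + ε * c ^ 2 + ε ^ 2 * d ^ 2 = 0)
    (hcd : ¬ (c = 0 ∧ d = 0)) : a * d - b * c ≠ 0 := by
  intro hdet
  have key : (a ^ 2 + ε * b ^ 2) * (a ^ 2 + ε * c ^ 2) = 0 := by
    linear_combination a ^ 2 * hQ - ε ^ 2 * (a * d + b * c) * hdet
  rcases mul_eq_zero.mp key with h | h
  · obtain ⟨ha, hb⟩ := aniso ε hns h
    subst ha; subst hb
    have h2 : c ^ 2 + ε * d ^ 2 = 0 :=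
      mul_left_cancel₀ hε (show ε * (c ^ 2 + ε * d ^ 2) = ε * 0 by linear_combination hQ)
    exact hcd (aniso ε hns h2)
  · obtain ⟨ha, hc⟩ := aniso ε hns h
    subst ha; subst hc
    have h2 : b ^ 2 + ε * d ^ 2 = 0 :=
      mul_left_cancel₀ hε (show ε * (b ^ 2 + ε * d ^ 2) = ε * 0 by linear_combination hQ)
    obtain ⟨hb, hd⟩ := aniso ε hns h2
    exact hcd ⟨rfl, hd⟩

end Aux

/-- Let `p` be an odd prime and `ε ∈ F_p^×` with `−ε` a non-square.
The number of elements of `PGL₂(F_p)`, i.e. `1/(p−1)` times the number of invertible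
`2×2` matrices `[[a,b],[c,d]]`, satisfying `a² + εb² + εc² + ε²d² = 0`, equals
`(p+1)²`.  (The condition is invariant under scalars, so the count of matrices is
`(p−1)·(p+1)²`.) -/
theorem stmt_11 (p : ℕ) [Fact p.Prime] (hodd : Odd p)
    (ε : ZMod p) (hε : ε ≠ 0) (hns : ¬ ∃ x : ZMod p, x ^ 2 = -ε) :
    {A : Matrix (Fin 2) (Fin 2) (ZMod p) | A.det ≠ 0 ∧
        (A 0 0) ^ 2 + ε * (A 0 1) ^ 2 + ε * (A 1 0) ^ 2 + ε ^ 2 * (A 1 1) ^ 2 = 0}.ncard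
      = (p - 1) * (p + 1) ^ 2 := by
  classical
  set S' : Finset ((ZMod p × ZMod p) × (ZMod p × ZMod p)) := univ.filter
    (fun x => x.2 ≠ (0, 0) ∧
      x.1.1 ^ 2 + ε * x.1.2 ^ 2 = -ε * (x.2.1 ^ 2 + ε * x.2.2 ^ 2)) with hS'
  set mm : ((ZMod p × ZMod p) × (ZMod p × ZMod p)) → Matrix (Fin 2) (Fin 2) (ZMod p) :=
    fun x => !![x.1.1, x.1.2; x.2.1, x.2.2] with hmm
  have hminj : Function.Injective mm := by
    intro x y h
    have h00 := congrFun (congrFun h 0) 0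
    have h01 := congrFun (congrFun h 0) 1
    have h10 := congrFun (congrFun h 1) 0
    have h11 := congrFun (congrFun h 1) 1
    simp only [hmm, Matrix.cons_val', Matrix.cons_val_zero, Matrix.cons_val_one,
      Matrix.head_cons, Matrix.empty_val', Matrix.cons_val_fin_one, Matrix.head_fin_const]
        at h00 h01 h10 h11
    exact Prod.ext (Prod.ext h00 h01) (Prod.ext h10 h11)
  have hset : {A : Matrix (Fin 2) (Fin 2) (ZMod p) | A.det ≠ 0 ∧
        (A 0 0) ^ 2 + ε * (A 0 1) ^ 2 + ε * (A 1 0) ^ 2 + ε ^ 2 * (A 1 1) ^ 2 = 0}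
      = mm '' ↑S' := by
    ext A
    constructor
    · rintro ⟨hdet, hQ⟩
      refine ⟨((A 0 0, A 0 1), (A 1 0, A 1 1)), ?_, ?_⟩
      · simp only [hS', Finset.coe_filter, Set.mem_setOf_eq, mem_univ, true_and]
        refine ⟨?_, by linear_combination hQ⟩
        intro h
        have hc : A 1 0 = 0 := congrArg Prod.fst h
        have hd : A 1 1 = 0 := congrArg Prod.snd h
        exact hdet (by rw [Matrix.det_fin_two, hc, hd]; ring)
      · ext i j
        fin_cases i <;> fin_cases j <;> simp [hmm]
    · rintro ⟨x, hx, rfl⟩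
      simp only [hS', Finset.coe_filter, Set.mem_setOf_eq, mem_univ, true_and] at hx
      obtain ⟨hne, hQ⟩ := hx
      have hQ' : x.1.1 ^ 2 + ε * x.1.2 ^ 2 + ε * x.2.1 ^ 2 + ε ^ 2 * x.2.2 ^ 2 = 0 := by
        linear_combination hQ
      have hcd : ¬ (x.2.1 = 0 ∧ x.2.2 = 0) := by
        rintro ⟨h1, h2⟩; exact hne (Prod.ext h1 h2)
      constructor
      · rw [hmm, Matrix.det_fin_two_of]
        exact det_ne ε hns hε hQ' hcd
      · simpa [hmm] using hQ'
  rw [hset, Set.ncard_image_of_injective _ hminj, Set.ncard_coe_finset]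
  have hScard : S'.card = (p * p - 1) * (p + 1) := by
    rw [Finset.card_eq_sum_card_fiberwise
      (f := fun x => x.2) (t := univ) (fun x _ => mem_univ x.2)]
    rw [← Finset.sum_erase_add _ _ (mem_univ ((0, 0) : ZMod p × ZMod p))]
    have hz : (S'.filter fun x => x.2 = ((0, 0) : ZMod p × ZMod p)).card = 0 := by
      rw [Finset.card_eq_zero, Finset.eq_empty_iff_forall_notMem]
      intro x hx
      simp only [hS', Finset.mem_coe, Finset.mem_filter, mem_univ, true_and] at hx
      exact hx.1.1 hx.2
    rw [hz, add_zero]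
    have hterm : ∀ cd ∈ (univ.erase ((0, 0) : ZMod p × ZMod p)),
        (S'.filter fun x => x.2 = cd).card = p + 1 := by
      intro cd hcd
      have hcd0 : cd ≠ (0, 0) := Finset.ne_of_mem_erase hcd
      have hN : cd.1 ^ 2 + ε * cd.2 ^ 2 ≠ 0 := by
        intro h
        obtain ⟨h1, h2⟩ := aniso ε hns h
        exact hcd0 (Prod.ext h1 h2)
      have ht : -ε * (cd.1 ^ 2 + ε * cd.2 ^ 2) ≠ 0 :=
        mul_ne_zero (neg_ne_zero.mpr hε) hN
      rw [← Tcard hodd ε hε hns ht]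
      refine Finset.card_nbij' (i := Prod.fst) (j := fun ab => (ab, cd)) ?_ ?_ ?_ ?_
      · intro x hx
        simp only [hS', Finset.mem_coe, Finset.mem_filter, mem_univ, true_and] at hx ⊢
        rw [← hx.2]
        exact hx.1.2
      · intro ab hab
        simp only [hS', Finset.mem_coe, Finset.mem_filter, mem_univ, true_and] at hab ⊢
        exact ⟨⟨hcd0, hab⟩, trivial⟩
      · intro x hx
        simp only [hS', Finset.mem_coe, Finset.mem_filter, mem_univ, true_and] at hx
        exact Prod.ext rfl hx.2.symm
      · intro ab _
        rfl
    rw [Finset.sum_congr rfl hterm, Finset.sum_const, smul_eq_mul]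
    congr 1
    rw [Finset.card_erase_of_mem (mem_univ _), Finset.card_univ, Fintype.card_prod,
      ZMod.card]
  rw [hScard]
  obtain ⟨k, rfl⟩ : ∃ k, p = k + 2 := ⟨p - 2, by have := (Fact.out : p.Prime).two_le; omega⟩
  have h1 : (k + 2) * (k + 2) - 1 = (k + 1) * (k + 3) := by
    have : (k + 2) * (k + 2) = (k + 1) * (k + 3) + 1 := by ring
    omega
  have h2 : k + 2 - 1 = k + 1 := by omega
  rw [h1, h2]
  ring
end

section
/- Let p be an odd prime. The number of elements of PGL_2(F_p), represented by matrices [[a,b],[c,d]] with ad−bc ≠ 0 up to scalars, satisfying ad + bc = 0, equals (p−1)². -/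
set_option maxRecDepth 8000

/-- For an odd prime `p`, the number of elements of `PGL₂(F_p)` whose
representing matrices `[[a,b],[c,d]]` (with `ad − bc ≠ 0`) satisfy `ad + bc = 0` equals
`(p−1)²`; equivalently, the number of invertible matrices with `ad + bc = 0` is
`(p−1) · (p−1)²` (the condition being scalar-invariant). -/
theorem stmt_13 (p : ℕ) [Fact p.Prime] (hodd : Odd p) :
    {A : Matrix (Fin 2) (Fin 2) (ZMod p) | A.det ≠ 0 ∧
        A 0 0 * A 1 1 + A 0 1 * A 1 0 = 0}.ncard
      = (p - 1) * (p - 1) ^ 2 := by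
  classical
  have hp : p.Prime := Fact.out
  have hp2 : p ≠ 2 := by
    rintro rfl
    exact (by decide : ¬ Odd 2) hodd
  have h2 : (2 : ZMod p) ≠ 0 := by
    have hnd : ¬ (p ∣ 2) := fun h =>
      hp2 ((Nat.prime_dvd_prime_iff_eq hp Nat.prime_two).mp h)
    have := (ZMod.natCast_eq_zero_iff 2 p).not.mpr hnd
    simpa using this
  set S : Set (Matrix (Fin 2) (Fin 2) (ZMod p)) :=
    {A | A.det ≠ 0 ∧ A 0 0 * A 1 1 + A 0 1 * A 1 0 = 0} with hS
  let g : (ZMod p)ˣ × (ZMod p)ˣ × (ZMod p)ˣ → S := fun x =>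
    ⟨!![(x.1 : ZMod p), (x.2.2 : ZMod p);
        -((x.1 : ZMod p) * x.2.1) * (x.2.2⁻¹ : (ZMod p)ˣ), (x.2.1 : ZMod p)], by
      obtain ⟨a, d, b⟩ := x
      constructor
      · have : (!![(a : ZMod p), (b : ZMod p);
          -((a : ZMod p) * d) * (b⁻¹ : (ZMod p)ˣ), (d : ZMod p)]).det
            = 2 * (a * d) := by
          simp only [Matrix.det_fin_two_of]
          linear_combination ((a : ZMod p) * d) * Units.mul_inv b
        rw [this]
        exact mul_ne_zero h2 (mul_ne_zero a.ne_zero d.ne_zero)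
      · show (a : ZMod p) * d + (b : ZMod p) * (-((a : ZMod p) * d) * (b⁻¹ : (ZMod p)ˣ)) = 0
        linear_combination (-((a : ZMod p) * d)) * Units.mul_inv b⟩
  have hg : Function.Bijective g := by
    constructor
    · rintro ⟨a, d, b⟩ ⟨a', d', b'⟩ h
      have h00 := congrFun (congrFun (Subtype.ext_iff.mp h) 0) 0
      have h01 := congrFun (congrFun (Subtype.ext_iff.mp h) 0) 1
      have h11 := congrFun (congrFun (Subtype.ext_iff.mp h) 1) 1
      clear h
      change (a : ZMod p) = a' at h00
      change (b : ZMod p) = b' at h01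
      change (d : ZMod p) = d' at h11
      ext <;> simp [Units.ext_iff, h00, h01, h11]
    · rintro ⟨A, hdet, hsum⟩
      have hdet2 : A 0 0 * A 1 1 - A 0 1 * A 1 0 ≠ 0 := by
        rwa [Matrix.det_fin_two] at hdet
      have had : A 0 0 * A 1 1 ≠ 0 := by
        intro h0
        apply hdet2
        linear_combination 2 * h0 - hsum
      have ha : A 0 0 ≠ 0 := fun h => had (by rw [h, zero_mul])
      have hd : A 1 1 ≠ 0 := fun h => had (by rw [h, mul_zero])
      have hb : A 0 1 ≠ 0 := by
        intro h
        apply had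
        linear_combination hsum - A 1 0 * h
      refine ⟨⟨Units.mk0 _ ha, Units.mk0 _ hd, Units.mk0 _ hb⟩, ?_⟩
      apply Subtype.ext
      show !![A 0 0, A 0 1; -(A 0 0 * A 1 1) * (Units.mk0 _ hb)⁻¹, A 1 1] = A
      have hc : -(A 0 0 * A 1 1 * (A 0 1)⁻¹) = A 1 0 := by
        field_simp
        linear_combination -hsum
      ext i j
      fin_cases i <;> fin_cases j <;> simp [hc]
  have hcard : S.ncard = Nat.card ((ZMod p)ˣ × (ZMod p)ˣ × (ZMod p)ˣ) := by
    rw [Set.ncard_eq_toFinset_card', Set.toFinset_card, ← Nat.card_eq_fintype_card]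
    exact (Nat.card_congr (Equiv.ofBijective g hg)).symm
  rw [hcard]
  simp only [Nat.card_eq_fintype_card, Fintype.card_prod,
    ZMod.card_units_eq_totient, Nat.totient_prime hp]
  ring
end

section
/- Let p be an odd prime, let V = F_p³ with basis v₁, v₂, v₃ identified with x², xy, y², and let S = V ⋊ ⟨u⟩ where u acts on V by the coefficient action of [[1,0],[1,1]] on binary quadratic forms: x² ↦ x², xy ↦ xy + x², y² ↦ y² + 2xy + x², i.e. v₁ ↦ v₁, v₂ ↦ v₂ + v₁, v₃ ↦ v₃ + 2v₂ + v₁. Then S has order p⁴, Z(S) = ⟨v₁⟩, and S is isomorphic to a Sylow p-subgroup of PSp₄(p). -/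
set_option linter.unusedSectionVars false

open Matrix

-- generic lemmas
lemma myNat_card_sigma {ι : Type*} [Fintype ι] (f : ι → Type*) [∀ i, Finite (f i)] :
    Nat.card (Σ i, f i) = ∑ i, Nat.card (f i) := by
  letI : ∀ i, Fintype (f i) := fun i => Fintype.ofFinite _
  rw [Nat.card_eq_fintype_card, Fintype.card_sigma]
  simp [Nat.card_eq_fintype_card]

lemma card_fiber {G H : Type*} [AddCommGroup G] [AddCommGroup H] [Finite G] [Finite H]
    (f : G →+ H) (hs : Function.Surjective f) (h : H) :
    Nat.card {x : G // f x = h} * Nat.card H = Nat.card G := by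
  obtain ⟨x₀, hx₀⟩ := hs h
  have e : {x : G // f x = h} ≃ f.ker := by
    refine ⟨fun x => ⟨x.1 - x₀, ?_⟩, fun y => ⟨y.1 + x₀, ?_⟩, fun x => by simp, fun y => by simp⟩
    · simp [AddMonoidHom.mem_ker, map_sub, x.2, hx₀]
    · have := y.2
      simp only [AddMonoidHom.mem_ker] at this
      simp [map_add, hx₀, this]
  rw [Nat.card_congr e]
  have e2 : Nat.card H = Nat.card (G ⧸ f.ker) :=
    (Nat.card_congr (QuotientAddGroup.quotientKerEquivOfSurjective f hs).toEquiv).symm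
  rw [e2, mul_comm, ← AddSubgroup.card_eq_card_quotient_mul_card_addSubgroup]

section Symp

abbrev Vp (p : ℕ) := (Fin 2 ⊕ Fin 2) → ZMod p

variable {p : ℕ} [Fact p.Prime]

def Bl (x y : Vp p) : ZMod p := x ⬝ᵥ (Matrix.J (Fin 2) (ZMod p) *ᵥ y)

lemma two_nz (hodd : Odd p) : (2 : ZMod p) ≠ 0 := by
  have : ((2 : ℕ) : ZMod p) ≠ 0 := by
    rw [Ne, ZMod.natCast_eq_zero_iff]
    intro h2
    rcases hodd with ⟨k, hk⟩
    have := Nat.le_of_dvd two_pos h2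
    have := (Fact.out : p.Prime).two_le
    omega
  simpa using this

lemma Bl_skew (x y : Vp p) : Bl x y = - Bl y x := by
  unfold Bl
  rw [dotProduct_mulVec, ← mulVec_transpose, J_transpose, dotProduct_comm]
  simp [neg_mulVec]

lemma Bl_self (hodd : Odd p) (x : Vp p) : Bl x x = 0 := by
  have h := Bl_skew x x
  have h2 : (2 : ZMod p) ≠ 0 := two_nz hodd
  have : (2 : ZMod p) * Bl x x = 0 := by linear_combination h
  exact (mul_eq_zero.mp this).resolve_left h2

lemma Bl_add_right (x y z : Vp p) : Bl x (y + z) = Bl x y + Bl x z := by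
  unfold Bl; rw [mulVec_add, dotProduct_add]

lemma Bl_add_left (x y z : Vp p) : Bl (x + y) z = Bl x z + Bl y z := by
  unfold Bl; rw [add_dotProduct]

lemma Bl_smul_right (c : ZMod p) (x y : Vp p) : Bl x (c • y) = c * Bl x y := by
  unfold Bl; rw [mulVec_smul, dotProduct_smul, smul_eq_mul]

lemma Bl_zero_right (x : Vp p) : Bl x 0 = 0 := by
  unfold Bl; simp

lemma Bl_zero_left (x : Vp p) : Bl 0 x = 0 := by
  unfold Bl; simp

lemma Bl_nondeg (x : Vp p) (h : ∀ y, Bl x y = 0) : x = 0 := by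
  have hv : Matrix.vecMul x (Matrix.J (Fin 2) (ZMod p)) = 0 := by
    funext j
    have := h (Pi.single j 1)
    unfold Bl at this
    rwa [dotProduct_mulVec, dotProduct_single, mul_one] at this
  have := congrArg (fun v => Matrix.vecMul v (Matrix.J (Fin 2) (ZMod p))) hv
  simp only [vecMul_vecMul, Matrix.J_squared] at this
  simpa [Matrix.vecMul_neg] using this

end Symp

section Count
variable {p : ℕ} [Fact p.Prime]

lemma card_Vp : Nat.card (Vp p) = p ^ 4 := by
  rw [Nat.card_pi]
  simp [Nat.card_zmod]

lemma card_fiber1 (a : Vp p) (ha : a ≠ 0) (c : ZMod p) :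
    Nat.card {x : Vp p // Bl a x = c} = p ^ 3 := by
  have hp : 0 < p := (Fact.out : p.Prime).pos
  set ℓ : Vp p →+ ZMod p := AddMonoidHom.mk' (fun x => Bl a x) (Bl_add_right a) with hℓ
  have hs : Function.Surjective ℓ := by
    obtain ⟨y, hy⟩ : ∃ y, Bl a y ≠ 0 := by
      by_contra h
      push_neg at h
      exact ha (Bl_nondeg a h)
    intro t
    refine ⟨(t * (Bl a y)⁻¹) • y, ?_⟩
    simp only [hℓ, AddMonoidHom.mk'_apply, Bl_smul_right]
    field_simp
  have h := card_fiber ℓ hs c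
  rw [card_Vp, Nat.card_zmod] at h
  have he : Nat.card {x : Vp p // Bl a x = c} = Nat.card {x : Vp p // ℓ x = c} :=
    Nat.card_congr (Equiv.subtypeEquivRight (fun x => by simp [hℓ])).symm
  rw [he]
  have : Nat.card {x : Vp p // ℓ x = c} * p = p ^ 3 * p := by
    rw [h]; ring
  exact Nat.eq_of_mul_eq_mul_right hp this

lemma card_fiber2 (hodd : Odd p) (a c : Vp p) (hac : Bl a c = -1) :
    Nat.card {x : Vp p // Bl a x = 0 ∧ Bl c x = 0} = p ^ 2 := by
  have hp : 0 < p := (Fact.out : p.Prime).pos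
  have hca : Bl c a = 1 := by rw [Bl_skew, hac]; ring
  set ℓ : Vp p →+ ZMod p × ZMod p :=
    AddMonoidHom.mk' (fun x => (Bl a x, Bl c x))
      (fun x y => by simp [Bl_add_right, Prod.ext_iff]) with hℓ
  have hs : Function.Surjective ℓ := by
    rintro ⟨s, t⟩
    refine ⟨t • a + (-s) • c, ?_⟩
    simp only [hℓ, AddMonoidHom.mk'_apply, Bl_add_right, Bl_smul_right, Prod.mk.injEq,
      Bl_self hodd, hac, hca]
    constructor <;> ring
  have h := card_fiber ℓ hs (0, 0)
  rw [card_Vp, Nat.card_prod, Nat.card_zmod] at h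
  have he : Nat.card {x : Vp p // Bl a x = 0 ∧ Bl c x = 0} = Nat.card {x : Vp p // ℓ x = (0,0)} :=
    Nat.card_congr (Equiv.subtypeEquivRight (fun x => by
      simp [hℓ, Prod.ext_iff])).symm
  rw [he]
  have : Nat.card {x : Vp p // ℓ x = (0,0)} * (p * p) = p ^ 2 * (p * p) := by
    rw [h]; ring
  exact Nat.eq_of_mul_eq_mul_right (by positivity) this

lemma card_fiber3 (hodd : Odd p) (a c b : Vp p) (hac : Bl a c = -1)
    (hab : Bl a b = 0) (hcb : Bl c b = 0) (hb : b ≠ 0) :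
    Nat.card {x : Vp p // Bl a x = 0 ∧ Bl c x = 0 ∧ Bl b x = -1} = p := by
  have hp : 0 < p := (Fact.out : p.Prime).pos
  have hca : Bl c a = 1 := by rw [Bl_skew, hac]; ring
  have hba : Bl b a = 0 := by rw [Bl_skew, hab]; ring
  have hbc : Bl b c = 0 := by rw [Bl_skew, hcb]; ring
  obtain ⟨w₀, h1, h2, h3⟩ : ∃ w₀, Bl a w₀ = 0 ∧ Bl c w₀ = 0 ∧ Bl b w₀ ≠ 0 := by
    by_contra h
    push_neg at h
    apply hb
    apply Bl_nondeg
    intro v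
    have e1 : Bl a (v + (Bl a v) • c + (- Bl c v) • a) = 0 := by
      rw [Bl_add_right, Bl_add_right, Bl_smul_right, Bl_smul_right, Bl_self hodd, hac]; ring
    have e2 : Bl c (v + (Bl a v) • c + (- Bl c v) • a) = 0 := by
      rw [Bl_add_right, Bl_add_right, Bl_smul_right, Bl_smul_right, Bl_self hodd, hca]; ring
    have key := h _ e1 e2
    rw [Bl_add_right, Bl_add_right, Bl_smul_right, Bl_smul_right, hba, hbc] at key
    linear_combination key
  have hw1 : Bl a ((Bl b w₀)⁻¹ • w₀) = 0 := by rw [Bl_smul_right, h1, mul_zero]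
  have hw2 : Bl c ((Bl b w₀)⁻¹ • w₀) = 0 := by rw [Bl_smul_right, h2, mul_zero]
  have hw3 : Bl b ((Bl b w₀)⁻¹ • w₀) = 1 := by rw [Bl_smul_right]; exact inv_mul_cancel₀ h3
  set w := (Bl b w₀)⁻¹ • w₀
  set ℓ : Vp p →+ ZMod p × ZMod p × ZMod p :=
    AddMonoidHom.mk' (fun x => (Bl a x, Bl c x, Bl b x))
      (fun x y => by simp [Bl_add_right, Prod.ext_iff]) with hℓ
  have hs : Function.Surjective ℓ := by
    rintro ⟨s, t, u⟩
    refine ⟨t • a + (-s) • c + u • w, ?_⟩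
    simp only [hℓ, AddMonoidHom.mk'_apply, Bl_add_right, Bl_smul_right, Prod.mk.injEq,
      Bl_self hodd, hac, hca, hba, hbc, hw1, hw2, hw3]
    refine ⟨by ring, by ring, by ring⟩
  have h := card_fiber ℓ hs (0, 0, -1)
  rw [card_Vp, Nat.card_prod, Nat.card_prod, Nat.card_zmod] at h
  have he : Nat.card {x : Vp p // Bl a x = 0 ∧ Bl c x = 0 ∧ Bl b x = -1}
      = Nat.card {x : Vp p // ℓ x = (0,0,-1)} :=
    Nat.card_congr (Equiv.subtypeEquivRight (fun x => by
      simp [hℓ, Prod.ext_iff])).symm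
  rw [he]
  have : Nat.card {x : Vp p // ℓ x = (0,0,-1)} * (p * (p * p)) = p * (p * (p * p)) := by
    rw [h]; ring
  exact Nat.eq_of_mul_eq_mul_right (by positivity) this

end Count

section Total
variable {p : ℕ} [Fact p.Prime]

lemma neg_one_nz : (-1 : ZMod p) ≠ 0 := by
  have : Nontrivial (ZMod p) := ZMod.nontrivial_iff.mpr (Fact.out : p.Prime).ne_one
  simp

lemma entry_Bl (M : Matrix (Fin 2 ⊕ Fin 2) (Fin 2 ⊕ Fin 2) (ZMod p)) (i j : Fin 2 ⊕ Fin 2) :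
    (M * Matrix.J (Fin 2) (ZMod p) * Mᵀ) i j = Bl (M i) (M j) := by
  rw [Matrix.mul_assoc]
  simp only [Matrix.mul_apply, Bl, Matrix.mulVec, dotProduct, Matrix.transpose_apply,
    Finset.mul_sum]

lemma mem_symp_iff (M : Matrix (Fin 2 ⊕ Fin 2) (Fin 2 ⊕ Fin 2) (ZMod p)) :
    M ∈ Matrix.symplecticGroup (Fin 2) (ZMod p) ↔
      ∀ i j, Bl (M i) (M j) = Matrix.J (Fin 2) (ZMod p) i j := by
  rw [SymplecticGroup.mem_iff, ← Matrix.ext_iff]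
  exact forall₂_congr (fun i j => by rw [entry_Bl])

/-- the 6 essential conditions -/
def SympCond (q : Vp p × Vp p × Vp p × Vp p) : Prop :=
  Bl q.1 q.2.1 = 0 ∧ Bl q.1 q.2.2.1 = -1 ∧ Bl q.1 q.2.2.2 = 0 ∧
  Bl q.2.1 q.2.2.1 = 0 ∧ Bl q.2.1 q.2.2.2 = -1 ∧ Bl q.2.2.1 q.2.2.2 = 0

lemma J_vals : (Matrix.J (Fin 2) (ZMod p) (Sum.inl 0) (Sum.inl 0) = 0) := by
  simp [Matrix.J]

set_option maxHeartbeats 2000000 in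
lemma symp_equiv_rows (hodd : Odd p) :
    Nonempty (↥(Matrix.symplecticGroup (Fin 2) (ZMod p)) ≃ {q : Vp p × Vp p × Vp p × Vp p // SympCond q}) := by
  refine ⟨⟨fun M => ⟨(M.1 (Sum.inl 0), M.1 (Sum.inl 1), M.1 (Sum.inr 0), M.1 (Sum.inr 1)), ?_⟩,
    fun q => ⟨Matrix.of (Sum.elim ![q.1.1, q.1.2.1] ![q.1.2.2.1, q.1.2.2.2]), ?_⟩, ?_, ?_⟩⟩
  · have h := (mem_symp_iff M.1).mp M.2
    refine ⟨?_, ?_, ?_, ?_, ?_, ?_⟩ <;>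
      [have := h (Sum.inl 0) (Sum.inl 1); have := h (Sum.inl 0) (Sum.inr 0);
       have := h (Sum.inl 0) (Sum.inr 1); have := h (Sum.inl 1) (Sum.inr 0);
       have := h (Sum.inl 1) (Sum.inr 1); have := h (Sum.inr 0) (Sum.inr 1)] <;>
      simpa [Matrix.J, Matrix.one_apply] using this
  · obtain ⟨⟨a, b, c, d⟩, h1, h2, h3, h4, h5, h6⟩ := q
    simp only at h1 h2 h3 h4 h5 h6 ⊢
    have s1 : Bl b a = 0 := by rw [Bl_skew, h1]; ring
    have s2 : Bl c a = 1 := by rw [Bl_skew, h2]; ring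
    have s3 : Bl d a = 0 := by rw [Bl_skew, h3]; ring
    have s4 : Bl c b = 0 := by rw [Bl_skew, h4]; ring
    have s5 : Bl d b = 1 := by rw [Bl_skew, h5]; ring
    have s6 : Bl d c = 0 := by rw [Bl_skew, h6]; ring
    have ea : (Matrix.of (Sum.elim ![a, b] ![c, d])) (Sum.inl 0) = a := rfl
    have eb : (Matrix.of (Sum.elim ![a, b] ![c, d])) (Sum.inl 1) = b := rfl
    have ec : (Matrix.of (Sum.elim ![a, b] ![c, d])) (Sum.inr 0) = c := rfl
    have ed : (Matrix.of (Sum.elim ![a, b] ![c, d])) (Sum.inr 1) = d := rfl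
    rw [mem_symp_iff]
    rintro (i | i) (j | j) <;> fin_cases i <;> fin_cases j <;>
      simp only [ea, eb, ec, ed, Matrix.J, Matrix.fromBlocks_apply₁₁,
        Matrix.fromBlocks_apply₁₂, Matrix.fromBlocks_apply₂₁, Matrix.fromBlocks_apply₂₂,
        Matrix.neg_apply, Matrix.zero_apply] <;>
      norm_num [Matrix.one_apply] <;>
      first
        | exact h1 | exact h2 | exact h3 | exact h4 | exact h5 | exact h6
        | exact s1 | exact s2 | exact s3 | exact s4 | exact s5 | exact s6
        | exact Bl_self hodd _
  · intro M
    apply Subtype.ext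
    funext i j
    rcases i with i | i <;> fin_cases i <;> rfl
  · intro q
    apply Subtype.ext
    rfl

end Total

section Assemble
variable {p : ℕ} [Fact p.Prime]

lemma inner_card (hodd : Odd p) (a c : Vp p) (hac : Bl a c = -1) :
    Nat.card (Σ b : {b : Vp p // Bl a b = 0 ∧ Bl c b = 0},
      {d : Vp p // Bl a d = 0 ∧ Bl c d = 0 ∧ Bl b.1 d = -1}) = (p ^ 2 - 1) * p := by
  rw [myNat_card_sigma]
  have hval : ∀ b : {b : Vp p // Bl a b = 0 ∧ Bl c b = 0},
      Nat.card {d : Vp p // Bl a d = 0 ∧ Bl c d = 0 ∧ Bl b.1 d = -1}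
        = if b.1 = 0 then 0 else p := by
    intro b
    by_cases hb : b.1 = 0
    · rw [if_pos hb]
      have : IsEmpty {d : Vp p // Bl a d = 0 ∧ Bl c d = 0 ∧ Bl b.1 d = -1} := by
        refine ⟨fun d => ?_⟩
        obtain ⟨dv, hd1, hd2, hd3⟩ := d
        rw [hb, Bl_zero_left] at hd3
        exact neg_one_nz (p := p) hd3.symm
      exact Nat.card_of_isEmpty
    · rw [if_neg hb]
      exact card_fiber3 hodd a c b.1 hac b.2.1 b.2.2 hb
  rw [Finset.sum_congr rfl (fun b _ => hval b)]
  set z : {b : Vp p // Bl a b = 0 ∧ Bl c b = 0} := ⟨0, Bl_zero_right a, Bl_zero_right c⟩ with hz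
  have hrw : ∀ b : {b : Vp p // Bl a b = 0 ∧ Bl c b = 0},
      (if b.1 = 0 then 0 else p) = (if b = z then 0 else p) := by
    intro b
    congr 1
    simp [Subtype.ext_iff, hz]
  rw [Finset.sum_congr rfl (fun b _ => hrw b)]
  rw [← Finset.add_sum_erase Finset.univ _ (Finset.mem_univ z), if_pos rfl, zero_add]
  rw [Finset.sum_congr rfl (fun b hb => if_neg (Finset.ne_of_mem_erase hb)),
    Finset.sum_const, smul_eq_mul, Finset.card_erase_of_mem (Finset.mem_univ z),
    Finset.card_univ]
  congr 2
  rw [← Nat.card_eq_fintype_card]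
  exact card_fiber2 hodd a c hac

lemma base_card (hodd : Odd p) :
    Nat.card {s : Vp p × Vp p // Bl s.1 s.2 = -1} = (p ^ 4 - 1) * p ^ 3 := by
  have e : {s : Vp p × Vp p // Bl s.1 s.2 = -1} ≃ Σ a : Vp p, {c : Vp p // Bl a c = -1} :=
    ⟨fun s => ⟨s.1.1, s.1.2, s.2⟩, fun t => ⟨(t.1, t.2.1), t.2.2⟩,
      fun s => rfl, fun t => rfl⟩
  rw [Nat.card_congr e, myNat_card_sigma]
  have hval : ∀ a : Vp p, Nat.card {c : Vp p // Bl a c = -1} = if a = 0 then 0 else p ^ 3 := by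
    intro a
    by_cases ha : a = 0
    · rw [if_pos ha]
      have : IsEmpty {c : Vp p // Bl a c = -1} := by
        refine ⟨fun d => ?_⟩
        obtain ⟨dv, hd⟩ := d
        rw [ha, Bl_zero_left] at hd
        exact neg_one_nz (p := p) hd.symm
      exact Nat.card_of_isEmpty
    · rw [if_neg ha]
      exact card_fiber1 a ha (-1)
  rw [Finset.sum_congr rfl (fun a _ => hval a)]
  rw [← Finset.add_sum_erase Finset.univ _ (Finset.mem_univ (0 : Vp p)), if_pos rfl, zero_add]
  rw [Finset.sum_congr rfl (fun b hb => if_neg (Finset.ne_of_mem_erase hb)),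
    Finset.sum_const, smul_eq_mul, Finset.card_erase_of_mem (Finset.mem_univ _),
    Finset.card_univ]
  congr 2
  rw [← Nat.card_eq_fintype_card]
  exact card_Vp

lemma card_symp (hodd : Odd p) :
    Nat.card ↥(Matrix.symplecticGroup (Fin 2) (ZMod p))
      = p ^ 4 * ((p ^ 4 - 1) * (p ^ 2 - 1)) := by
  obtain ⟨e⟩ := symp_equiv_rows (p := p) hodd
  rw [Nat.card_congr e]
  have e2 : {q : Vp p × Vp p × Vp p × Vp p // SympCond q} ≃
      Σ s : {s : Vp p × Vp p // Bl s.1 s.2 = -1},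
        Σ b : {b : Vp p // Bl s.1.1 b = 0 ∧ Bl s.1.2 b = 0},
          {d : Vp p // Bl s.1.1 d = 0 ∧ Bl s.1.2 d = 0 ∧ Bl b.1 d = -1} := by
    refine ⟨fun q => ?_, fun t => ?_, fun q => ?_, fun t => ?_⟩
    · obtain ⟨⟨a, b, c, d⟩, h1, h2, h3, h4, h5, h6⟩ := q
      exact ⟨⟨(a, c), h2⟩, ⟨b, h1, by rw [Bl_skew, h4]; ring⟩, ⟨d, h3, h6, h5⟩⟩
    · obtain ⟨⟨⟨a, c⟩, h2⟩, ⟨b, h1, h4'⟩, ⟨d, h3, h6, h5⟩⟩ := t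
      exact ⟨(a, b, c, d), h1, h2, h3, by rw [Bl_skew, h4']; ring, h5, h6⟩
    · obtain ⟨⟨a, b, c, d⟩, h1, h2, h3, h4, h5, h6⟩ := q
      rfl
    · obtain ⟨⟨⟨a, c⟩, h2⟩, ⟨b, h1, h4'⟩, ⟨d, h3, h6, h5⟩⟩ := t
      rfl
  rw [Nat.card_congr e2, myNat_card_sigma]
  rw [Finset.sum_congr rfl (fun s _ => inner_card hodd s.1.1 s.1.2 s.2)]
  rw [Finset.sum_const, smul_eq_mul, Finset.card_univ, ← Nat.card_eq_fintype_card,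
    base_card hodd]
  have h4 : 1 ≤ p ^ 4 := Nat.one_le_pow _ _ (Fact.out : p.Prime).pos
  have h2 : 1 ≤ p ^ 2 := Nat.one_le_pow _ _ (Fact.out : p.Prime).pos
  set A := p ^ 4 - 1
  set B := p ^ 2 - 1
  have : p ^ 3 * p = p ^ 4 := by ring
  calc A * p ^ 3 * (B * p) = (p ^ 3 * p) * (A * B) := by ring
    _ = p ^ 4 * (A * B) := by rw [this]
end Assemble

section SDP
variable {p : ℕ} [Fact p.Prime]

def Mn (n : ZMod p) : Matrix (Fin 3) (Fin 3) (ZMod p) := !![1, n, n^2; 0, 1, 2*n; 0, 0, 1]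

lemma Mn_mulVec (a b : ZMod p) (v : Fin 3 → ZMod p) :
    Mn a *ᵥ (Mn b *ᵥ v) = Mn (a + b) *ᵥ v := by
  funext i
  fin_cases i <;>
    simp only [Mn, Matrix.mulVec, dotProduct, Fin.sum_univ_three, Matrix.cons_val_zero,
      Matrix.cons_val_one, Matrix.cons_val_two, Matrix.head_cons, Matrix.tail_cons,
      Matrix.cons_val', Matrix.empty_val', Matrix.cons_val_fin_one, Matrix.head_fin_const,
      Matrix.of_apply, show ((⟨0, by omega⟩ : Fin 3)) = 0 from rfl,
      show ((⟨1, by omega⟩ : Fin 3)) = 1 from rfl,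
      show ((⟨2, by omega⟩ : Fin 3)) = 2 from rfl] <;> ring

lemma Mn_zero : (Mn (0 : ZMod p)) = 1 := by
  rw [Mn, Matrix.one_fin_three]
  norm_num

lemma Mn_zero_mulVec (v : Fin 3 → ZMod p) : Mn 0 *ᵥ v = v := by
  rw [Mn_zero, Matrix.one_mulVec]

variable (φ : Multiplicative (ZMod p) →* MulAut (Multiplicative (Fin 3 → ZMod p)))
variable (hφ : ∀ v : Fin 3 → ZMod p,
      φ (Multiplicative.ofAdd (1 : ZMod p)) (Multiplicative.ofAdd v) =
        Multiplicative.ofAdd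
          ((!![1, 1, 1; 0, 1, 2; 0, 0, 1] : Matrix (Fin 3) (Fin 3) (ZMod p)) *ᵥ v))

include hφ in
lemma phi_apply (n : ZMod p) (v : Fin 3 → ZMod p) :
    φ (Multiplicative.ofAdd n) (Multiplicative.ofAdd v) = Multiplicative.ofAdd (Mn n *ᵥ v) := by
  have hM1 : (!![1, 1, 1; 0, 1, 2; 0, 0, 1] : Matrix (Fin 3) (Fin 3) (ZMod p)) = Mn 1 := by
    norm_num [Mn]
  have key : ∀ (k : ℕ) (v : Fin 3 → ZMod p),
      φ (Multiplicative.ofAdd ((k : ZMod p))) (Multiplicative.ofAdd v)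
        = Multiplicative.ofAdd (Mn (k : ZMod p) *ᵥ v) := by
    intro k
    induction k with
    | zero =>
      intro v
      simp only [Nat.cast_zero]
      have : Multiplicative.ofAdd (0 : ZMod p) = 1 := rfl
      rw [this, MonoidHom.map_one φ, Mn_zero_mulVec]
      rfl
    | succ k ih =>
      intro v
      have hc : ((k + 1 : ℕ) : ZMod p) = (k : ZMod p) + 1 := by push_cast; ring
      rw [hc, ofAdd_add, MonoidHom.map_mul φ, MulAut.mul_apply, hφ v, hM1, ih (Mn 1 *ᵥ v), Mn_mulVec]
  have hn : ((n.val : ℕ) : ZMod p) = n := ZMod.natCast_rightInverse n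
  rw [← hn]
  exact key n.val v

end SDP

section Mats
variable {p : ℕ} [Fact p.Prime]

def Pm (n : ZMod p) : Matrix (Fin 2) (Fin 2) (ZMod p) := !![1, 0; n, 1]
def Qm (v : Fin 3 → ZMod p) (n : ZMod p) : Matrix (Fin 2) (Fin 2) (ZMod p) :=
  !![v 2, (2:ZMod p)⁻¹ * v 1 - n * v 2;
     (2:ZMod p)⁻¹ * v 1, v 0 - n * ((2:ZMod p)⁻¹ * v 1)]
def Sm (n : ZMod p) : Matrix (Fin 2) (Fin 2) (ZMod p) := !![1, -n; 0, 1]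
def matSD (v : Fin 3 → ZMod p) (n : ZMod p) : Matrix (Fin 2 ⊕ Fin 2) (Fin 2 ⊕ Fin 2) (ZMod p) :=
  Matrix.fromBlocks (Pm n) (Qm v n) 0 (Sm n)

lemma matSD_mem (v : Fin 3 → ZMod p) (n : ZMod p) :
    matSD v n ∈ Matrix.symplecticGroup (Fin 2) (ZMod p) := by
  rw [SymplecticGroup.mem_iff]
  ext i j
  rcases i with i | i <;> rcases j with j | j <;> fin_cases i <;> fin_cases j <;>
    simp only [matSD, Matrix.J, Matrix.fromBlocks_transpose, Matrix.fromBlocks_multiply,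
      Matrix.fromBlocks_apply₁₁, Matrix.fromBlocks_apply₁₂, Matrix.fromBlocks_apply₂₁,
      Matrix.fromBlocks_apply₂₂, Matrix.add_apply, Matrix.mul_apply, Fin.sum_univ_two,
      Pm, Qm, Sm, Matrix.transpose_apply, Matrix.neg_apply, Matrix.zero_apply,
      Matrix.one_apply, Matrix.cons_val_zero, Matrix.cons_val_one, Matrix.head_cons,
      Matrix.cons_val', Matrix.empty_val', Matrix.cons_val_fin_one, Matrix.head_fin_const,
      Matrix.of_apply, Matrix.transpose_zero, Matrix.transpose, Matrix.vecHead, Matrix.vecTail,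
      show ((⟨0, by omega⟩ : Fin 2)) = 0 from rfl,
      show ((⟨1, by omega⟩ : Fin 2)) = 1 from rfl] <;>
    norm_num <;> ring

lemma matSD_mul (hodd : Odd p) (v w : Fin 3 → ZMod p) (n m : ZMod p) :
    matSD (v + Mn n *ᵥ w) (n + m) = matSD v n * matSD w m := by
  have h2 : (2 : ZMod p) ≠ 0 := two_nz hodd
  ext i j
  rcases i with i | i <;> rcases j with j | j <;> fin_cases i <;> fin_cases j <;>
    simp only [matSD, Matrix.fromBlocks_multiply, Matrix.fromBlocks_apply₁₁,
      Matrix.fromBlocks_apply₁₂, Matrix.fromBlocks_apply₂₁, Matrix.fromBlocks_apply₂₂,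
      Matrix.add_apply, Matrix.mul_apply, Fin.sum_univ_two, Pm, Qm, Sm, Mn,
      Matrix.mulVec, dotProduct, Fin.sum_univ_three, Pi.add_apply, Fintype.sum_sum_type,
      Matrix.neg_apply, Matrix.zero_apply, Matrix.one_apply,
      Matrix.cons_val_zero, Matrix.cons_val_one, Matrix.cons_val_two, Matrix.head_cons,
      Matrix.tail_cons, Matrix.cons_val', Matrix.empty_val', Matrix.cons_val_fin_one,
      Matrix.head_fin_const, Matrix.of_apply,
      show ((⟨0, by omega⟩ : Fin 2)) = 0 from rfl,
      show ((⟨1, by omega⟩ : Fin 2)) = 1 from rfl,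
      show ((⟨0, by omega⟩ : Fin 3)) = 0 from rfl,
      show ((⟨1, by omega⟩ : Fin 3)) = 1 from rfl,
      show ((⟨2, by omega⟩ : Fin 3)) = 2 from rfl] <;>
    field_simp <;> ring

lemma matSD_one : matSD (0 : Fin 3 → ZMod p) 0 = 1 := by
  have hP : Pm (0 : ZMod p) = 1 := by rw [Pm, Matrix.one_fin_two]
  have hS : Sm (0 : ZMod p) = 1 := by rw [Sm, Matrix.one_fin_two]; norm_num
  have hQ : Qm (0 : Fin 3 → ZMod p) 0 = 0 := by
    rw [Qm]
    norm_num
    ext i j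
    fin_cases i <;> fin_cases j <;> rfl
  rw [matSD, hP, hS, hQ, Matrix.fromBlocks_one]

end Mats

section Final
open SemidirectProduct
variable {p : ℕ} [Fact p.Prime]
variable (φ : Multiplicative (ZMod p) →* MulAut (Multiplicative (Fin 3 → ZMod p)))
variable (hφ : ∀ v : Fin 3 → ZMod p,
      φ (Multiplicative.ofAdd (1 : ZMod p)) (Multiplicative.ofAdd v) =
        Multiplicative.ofAdd
          ((!![1, 1, 1; 0, 1, 2; 0, 0, 1] : Matrix (Fin 3) (Fin 3) (ZMod p)) *ᵥ v))

lemma Mn_mulVec_apply (n : ZMod p) (w : Fin 3 → ZMod p) :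
    Mn n *ᵥ w = ![w 0 + n * w 1 + n^2 * w 2, w 1 + 2*n*w 2, w 2] := by
  funext i
  fin_cases i <;>
    simp only [Mn, Matrix.mulVec, dotProduct, Fin.sum_univ_three, Matrix.cons_val_zero,
      Matrix.cons_val_one, Matrix.cons_val_two, Matrix.head_cons, Matrix.tail_cons,
      Matrix.cons_val', Matrix.empty_val', Matrix.cons_val_fin_one, Matrix.head_fin_const,
      Matrix.of_apply, show ((⟨0, by omega⟩ : Fin 3)) = 0 from rfl,
      show ((⟨1, by omega⟩ : Fin 3)) = 1 from rfl,
      show ((⟨2, by omega⟩ : Fin 3)) = 2 from rfl] <;> ring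

lemma card_S : Nat.card (Multiplicative (Fin 3 → ZMod p) ⋊[φ] Multiplicative (ZMod p)) = p ^ 4 := by
  have e : (Multiplicative (Fin 3 → ZMod p) ⋊[φ] Multiplicative (ZMod p)) ≃
      Multiplicative (Fin 3 → ZMod p) × Multiplicative (ZMod p) :=
    ⟨fun x => (x.left, x.right), fun y => ⟨y.1, y.2⟩, fun x => rfl, fun y => rfl⟩
  rw [Nat.card_congr e, Nat.card_prod, Nat.card_congr Multiplicative.toAdd,
    Nat.card_congr Multiplicative.toAdd, Nat.card_pi]
  simp only [Nat.card_zmod]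
  rw [Finset.prod_const, Finset.card_univ, Fintype.card_fin]
  ring

include hφ in
lemma center_S (hodd : Odd p) :
    Subgroup.center (Multiplicative (Fin 3 → ZMod p) ⋊[φ] Multiplicative (ZMod p)) =
      Subgroup.zpowers (SemidirectProduct.inl (Multiplicative.ofAdd (Pi.single 0 1))) := by
  have hsingle : ∀ m : ZMod p, Mn m *ᵥ (Pi.single 0 1 : Fin 3 → ZMod p) = Pi.single 0 1 := by
    intro m
    rw [Mn_mulVec_apply]
    funext i
    fin_cases i <;> simp [Pi.single_eq_of_ne, Pi.single_eq_same]
  ext x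
  constructor
  · intro hx
    have hcomm := Subgroup.mem_center_iff.mp hx
    -- commuting with inr (ofAdd 1)
    have h1 := hcomm (inr (Multiplicative.ofAdd (1 : ZMod p)))
    have h1l : φ (Multiplicative.ofAdd (1 : ZMod p)) x.left = x.left := by
      have := congrArg SemidirectProduct.left h1
      simpa [mul_left, mul_right] using this
    have hMw : Mn 1 *ᵥ (Multiplicative.toAdd x.left) = Multiplicative.toAdd x.left := by
      have h' : φ (Multiplicative.ofAdd (1 : ZMod p))
          (Multiplicative.ofAdd (Multiplicative.toAdd x.left)) =
          Multiplicative.ofAdd (Multiplicative.toAdd x.left) := by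
        simpa using h1l
      rw [phi_apply φ hφ] at h'
      exact congrArg Multiplicative.toAdd h'
    rw [Mn_mulVec_apply] at hMw
    set w : Fin 3 → ZMod p := Multiplicative.toAdd x.left with hwdef
    have e1 := congrFun hMw 1
    have e0 := congrFun hMw 0
    simp only [Matrix.cons_val_zero, Matrix.cons_val_one, Matrix.head_cons] at e1 e0
    have hw2 : w 2 = 0 := by
      have h2 : (2 : ZMod p) * w 2 = 0 := by linear_combination e1
      exact (mul_eq_zero.mp h2).resolve_left (two_nz hodd)
    have hw1 : w 1 = 0 := by linear_combination e0 - hw2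
    -- commuting with inl (single 2 1)
    have h2c := hcomm (inl (Multiplicative.ofAdd (Pi.single 2 1)))
    have h2l : φ x.right (Multiplicative.ofAdd (Pi.single 2 1)) =
        Multiplicative.ofAdd (Pi.single 2 1) := by
      have hthis := congrArg SemidirectProduct.left h2c
      simp only [mul_left, left_inl, right_inl, _root_.map_one, MulAut.one_apply] at hthis
      have h' : x.left * φ x.right (Multiplicative.ofAdd (Pi.single 2 1)) =
          x.left * Multiplicative.ofAdd (Pi.single 2 1) := by
        rw [← hthis, mul_comm]
      exact mul_left_cancel h'
    have hm0 : Multiplicative.toAdd x.right = 0 := by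
      have h' : φ (Multiplicative.ofAdd (Multiplicative.toAdd x.right))
          (Multiplicative.ofAdd (Pi.single 2 1)) = Multiplicative.ofAdd (Pi.single 2 1) := by
        simpa using h2l
      rw [phi_apply φ hφ] at h'
      have := congrArg Multiplicative.toAdd h'
      have e1' := congrFun ((Mn_mulVec_apply _ _).symm.trans this) 1
      simp only [toAdd_ofAdd, Matrix.cons_val_one, Matrix.head_cons, Pi.single_eq_same, Matrix.cons_val_zero,
        Pi.single_eq_of_ne (by decide : (1 : Fin 3) ≠ 2)] at e1'
      -- e1' : 0 + 2 * m * 1 = 0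
      have h2' : (2 : ZMod p) * Multiplicative.toAdd x.right = 0 := by linear_combination e1'
      exact (mul_eq_zero.mp h2').resolve_left (two_nz hodd)
    -- now x = inl (ofAdd w) with w = (w 0, 0, 0)
    rw [Subgroup.mem_zpowers_iff]
    refine ⟨((w 0).val : ℤ), ?_⟩
    rw [zpow_natCast, ← map_pow, ← ofAdd_nsmul]
    have hsv : (Pi.single 0 1 : Fin 3 → ZMod p) = ![1, 0, 0] := by
      funext i
      fin_cases i <;> simp [Pi.single_apply, Fin.ext_iff]
    have hw : (w 0).val • (Pi.single 0 1 : Fin 3 → ZMod p) = w := by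
      rw [hsv]
      funext i
      fin_cases i <;>
        simp only [Pi.smul_apply, nsmul_eq_mul,
          Matrix.cons_val_zero, Matrix.cons_val_one, Matrix.cons_val_two, Matrix.head_cons,
          Matrix.tail_cons, Matrix.cons_val', Matrix.empty_val', Matrix.cons_val_fin_one,
          Matrix.head_fin_const,
          show ((⟨0, by omega⟩ : Fin 3)) = 0 from rfl,
          show ((⟨1, by omega⟩ : Fin 3)) = 1 from rfl,
          show ((⟨2, by omega⟩ : Fin 3)) = 2 from rfl, mul_zero, mul_one]
      · exact ZMod.natCast_rightInverse (w 0)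
      · exact hw1.symm
      · exact hw2.symm
    rw [hw]
    ext
    · simp [hwdef]
    · simp only [right_inl]
      rw [← ofAdd_toAdd x.right, hm0]
      rfl
  · intro hx
    have hgen : (inl (Multiplicative.ofAdd (Pi.single 0 1)) :
        Multiplicative (Fin 3 → ZMod p) ⋊[φ] Multiplicative (ZMod p)) ∈
          Subgroup.center _ := by
      rw [Subgroup.mem_center_iff]
      intro g
      ext
      · simp only [mul_left, left_inl, right_inl]
        have h1 : φ (1 : Multiplicative (ZMod p)) g.left = g.left := by
          rw [MonoidHom.map_one φ]
          rfl
        have h2 : φ g.right (Multiplicative.ofAdd (Pi.single 0 1)) =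
            Multiplicative.ofAdd (Pi.single 0 1) := by
          rw [← ofAdd_toAdd g.right, phi_apply φ hφ, hsingle]
        rw [h1, h2, mul_comm]
      · simp [mul_right, right_inl]
    exact (Subgroup.zpowers_le.mpr hgen) hx

end Final

section Last
open SemidirectProduct
variable {p : ℕ} [Fact p.Prime]

def PhiSD (φ : Multiplicative (ZMod p) →* MulAut (Multiplicative (Fin 3 → ZMod p)))
    (hφ : ∀ v : Fin 3 → ZMod p,
      φ (Multiplicative.ofAdd (1 : ZMod p)) (Multiplicative.ofAdd v) =
        Multiplicative.ofAdd
          ((!![1, 1, 1; 0, 1, 2; 0, 0, 1] : Matrix (Fin 3) (Fin 3) (ZMod p)) *ᵥ v))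
    (hodd : Odd p) :
    (Multiplicative (Fin 3 → ZMod p) ⋊[φ] Multiplicative (ZMod p)) →*
      ↥(Matrix.symplecticGroup (Fin 2) (ZMod p)) where
  toFun x := ⟨matSD (Multiplicative.toAdd x.left) (Multiplicative.toAdd x.right),
    matSD_mem _ _⟩
  map_one' := by
    apply Subtype.ext
    show matSD (Multiplicative.toAdd (1 : Multiplicative (Fin 3 → ZMod p)))
      (Multiplicative.toAdd (1 : Multiplicative (ZMod p))) = 1
    rw [toAdd_one, toAdd_one, matSD_one]
  map_mul' x y := by
    apply Subtype.ext
    show matSD (Multiplicative.toAdd (x * y).left) (Multiplicative.toAdd (x * y).right)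
      = matSD _ _ * matSD _ _
    rw [mul_left, mul_right, toAdd_mul, toAdd_mul]
    have hphi : Multiplicative.toAdd (φ x.right y.left)
        = Mn (Multiplicative.toAdd x.right) *ᵥ (Multiplicative.toAdd y.left) := by
      conv_lhs => rw [← ofAdd_toAdd x.right, ← ofAdd_toAdd y.left, phi_apply φ hφ]
      rw [toAdd_ofAdd]
    rw [hphi]
    exact matSD_mul hodd _ _ _ _

lemma inj_comp (φ : Multiplicative (ZMod p) →* MulAut (Multiplicative (Fin 3 → ZMod p)))
    (hφ : ∀ v : Fin 3 → ZMod p,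
      φ (Multiplicative.ofAdd (1 : ZMod p)) (Multiplicative.ofAdd v) =
        Multiplicative.ofAdd
          ((!![1, 1, 1; 0, 1, 2; 0, 0, 1] : Matrix (Fin 3) (Fin 3) (ZMod p)) *ᵥ v))
    (hodd : Odd p) :
    Function.Injective
      ((QuotientGroup.mk' (Subgroup.center ↥(Matrix.symplecticGroup (Fin 2) (ZMod p)))).comp
        (PhiSD φ hφ hodd)) := by
  rw [injective_iff_map_eq_one]
  intro x hx
  have hc : (PhiSD φ hφ hodd x : ↥(Matrix.symplecticGroup (Fin 2) (ZMod p)))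
      ∈ Subgroup.center ↥(Matrix.symplecticGroup (Fin 2) (ZMod p)) := by
    rwa [MonoidHom.comp_apply, QuotientGroup.mk'_apply, QuotientGroup.eq_one_iff] at hx
  have hcomm := Subgroup.mem_center_iff.mp hc
    ⟨Matrix.J (Fin 2) (ZMod p), SymplecticGroup.J_mem _ _⟩
  have hmat := congrArg Subtype.val hcomm
  set v : Fin 3 → ZMod p := Multiplicative.toAdd x.left with hv
  set n : ZMod p := Multiplicative.toAdd x.right with hn
  have hmat' : Matrix.J (Fin 2) (ZMod p) * matSD v n = matSD v n * Matrix.J (Fin 2) (ZMod p) :=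
    hmat
  rw [matSD, Matrix.J, Matrix.fromBlocks_multiply, Matrix.fromBlocks_multiply] at hmat'
  simp only [Matrix.zero_mul, Matrix.mul_zero, Matrix.mul_one, Matrix.one_mul,
    Matrix.neg_mul, Matrix.mul_neg, zero_add, add_zero, Matrix.mul_zero, neg_zero] at hmat'
  -- hmat' : fromBlocks 0 (-Sm n) (Pm n) (Qm v n) = fromBlocks (Qm v n) (-Pm n) (Sm n) 0
  have eQ : (0 : Matrix (Fin 2) (Fin 2) (ZMod p)) = Qm v n := by
    funext i j
    have := congrFun (congrFun hmat' (Sum.inl i)) (Sum.inl j)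
    simpa [Matrix.fromBlocks_apply₁₁] using this
  have eP : Pm n = Sm n := by
    funext i j
    have := congrFun (congrFun hmat' (Sum.inr i)) (Sum.inl j)
    simpa [Matrix.fromBlocks_apply₂₁] using this
  have hn0 : n = 0 := by
    have := congrFun (congrFun eP 1) 0
    simpa [Pm, Sm] using this
  have h2 : (2 : ZMod p) * (2 : ZMod p)⁻¹ = 1 := mul_inv_cancel₀ (two_nz hodd)
  have hv2 : v 2 = 0 := by
    have := congrFun (congrFun eQ 0) 0
    simpa [Qm] using this.symm
  have hv1 : v 1 = 0 := by
    have := congrFun (congrFun eQ 1) 0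
    simp only [Qm, Matrix.zero_apply, Matrix.cons_val_zero, Matrix.cons_val_one,
      Matrix.head_cons, Matrix.cons_val', Matrix.empty_val', Matrix.cons_val_fin_one,
      Matrix.head_fin_const, Matrix.of_apply] at this
    -- this : 0 = 2⁻¹ * v 1
    linear_combination (-2 : ZMod p) * this - (v 1) * h2
  have hv0 : v 0 = 0 := by
    have := congrFun (congrFun eQ 1) 1
    simp only [Qm, Matrix.zero_apply, Matrix.cons_val_zero, Matrix.cons_val_one,
      Matrix.head_cons, Matrix.cons_val', Matrix.empty_val', Matrix.cons_val_fin_one,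
      Matrix.head_fin_const, Matrix.of_apply] at this
    rw [hn0] at this
    linear_combination -this
  have hvz : v = 0 := by
    funext i
    fin_cases i <;> assumption
  ext : 1
  · show x.left = 1
    rw [← ofAdd_toAdd x.left, ← hv, hvz]
    rfl
  · show x.right = 1
    rw [← ofAdd_toAdd x.right, ← hn, hn0]
    rfl

end Last


open Matrix
/-- Let `p` be an odd prime, `V = F_p³` with basis `v₁, v₂, v₃`
(thought of as the quadratic forms `x², xy, y²`), and let `u` act on `V` by
`v₁ ↦ v₁`, `v₂ ↦ v₂ + v₁`, `v₃ ↦ v₃ + 2v₂ + v₁` (the substitution `(x,y) ↦ (x+y,y)`).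
Form `S = V ⋊ ⟨u⟩` (with `⟨u⟩ ≅ C_p`, acting via a homomorphism `φ` sending the
generator to the above automorphism).  Then `|S| = p⁴`, `Z(S) = ⟨v₁⟩`, and `S` is
isomorphic to a Sylow `p`-subgroup of `PSp₄(p) = Sp₄(p)/Z(Sp₄(p))`. -/
theorem stmt_17 (p : ℕ) [Fact p.Prime] (hodd : Odd p)
    (φ : Multiplicative (ZMod p) →* MulAut (Multiplicative (Fin 3 → ZMod p)))
    (hφ : ∀ v : Fin 3 → ZMod p,
      φ (Multiplicative.ofAdd (1 : ZMod p)) (Multiplicative.ofAdd v) =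
        Multiplicative.ofAdd
          ((!![1, 1, 1; 0, 1, 2; 0, 0, 1] : Matrix (Fin 3) (Fin 3) (ZMod p)) *ᵥ v)) :
    Nat.card (Multiplicative (Fin 3 → ZMod p) ⋊[φ] Multiplicative (ZMod p)) = p ^ 4 ∧
    Subgroup.center (Multiplicative (Fin 3 → ZMod p) ⋊[φ] Multiplicative (ZMod p)) =
      Subgroup.zpowers
        (SemidirectProduct.inl (Multiplicative.ofAdd (Pi.single 0 1))) ∧
    ∃ Q : Sylow p
        (↥(Matrix.symplecticGroup (Fin 2) (ZMod p)) ⧸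
          Subgroup.center ↥(Matrix.symplecticGroup (Fin 2) (ZMod p))),
      Nonempty ((Multiplicative (Fin 3 → ZMod p) ⋊[φ] Multiplicative (ZMod p)) ≃*
        ↥(Q : Subgroup (↥(Matrix.symplecticGroup (Fin 2) (ZMod p)) ⧸
          Subgroup.center ↥(Matrix.symplecticGroup (Fin 2) (ZMod p))))) := by
  have hp : p.Prime := Fact.out
  refine ⟨card_S φ, center_S φ hφ hodd, ?_⟩
  set f := (QuotientGroup.mk' (Subgroup.center ↥(Matrix.symplecticGroup (Fin 2) (ZMod p)))).comp
    (PhiSD φ hφ hodd) with hf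
  have hinj : Function.Injective f := inj_comp φ hφ hodd
  have hcard_range : Nat.card f.range = p ^ 4 := by
    rw [← card_S φ]
    exact Nat.card_congr (MonoidHom.ofInjective hinj).toEquiv.symm
  have hdvd1 : p ^ 4 ∣ Nat.card (↥(Matrix.symplecticGroup (Fin 2) (ZMod p)) ⧸
      Subgroup.center ↥(Matrix.symplecticGroup (Fin 2) (ZMod p))) :=
    hcard_range ▸ Subgroup.card_subgroup_dvd_card f.range
  have hdvd2 : Nat.card (↥(Matrix.symplecticGroup (Fin 2) (ZMod p)) ⧸
      Subgroup.center ↥(Matrix.symplecticGroup (Fin 2) (ZMod p)))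
        ∣ p ^ 4 * ((p ^ 4 - 1) * (p ^ 2 - 1)) := by
    rw [← card_symp hodd]
    exact ⟨_, Subgroup.card_eq_card_quotient_mul_card_subgroup _⟩
  have hne : Nat.card (↥(Matrix.symplecticGroup (Fin 2) (ZMod p)) ⧸
      Subgroup.center ↥(Matrix.symplecticGroup (Fin 2) (ZMod p))) ≠ 0 :=
    Nat.card_pos.ne'
  have hfac : (Nat.card (↥(Matrix.symplecticGroup (Fin 2) (ZMod p)) ⧸
      Subgroup.center ↥(Matrix.symplecticGroup (Fin 2) (ZMod p)))).factorization p = 4 := by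
    obtain ⟨d, hd⟩ := hdvd1
    have hdne : d ≠ 0 := by
      rintro rfl
      rw [mul_zero] at hd
      exact hne hd
    have hddvd : d ∣ (p ^ 4 - 1) * (p ^ 2 - 1) := by
      have h' := hdvd2
      rw [hd] at h'
      exact (Nat.mul_dvd_mul_iff_left (pow_pos hp.pos 4)).mp h'
    have hp4 : 1 ≤ p ^ 4 := Nat.one_le_pow _ _ hp.pos
    have hp2 : 1 ≤ p ^ 2 := Nat.one_le_pow _ _ hp.pos
    have hpd : ¬ p ∣ d := by
      intro hpd
      have hdd : p ∣ (p ^ 4 - 1) * (p ^ 2 - 1) := hpd.trans hddvd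
      rcases (Nat.Prime.dvd_mul hp).mp hdd with h | h
      · have h1 : p ∣ p ^ 4 - (p ^ 4 - 1) := Nat.dvd_sub (dvd_pow_self p (by norm_num)) h
        rw [show p ^ 4 - (p ^ 4 - 1) = 1 by omega] at h1
        exact hp.one_lt.ne' (Nat.dvd_one.mp h1)
      · have h1 : p ∣ p ^ 2 - (p ^ 2 - 1) := Nat.dvd_sub (dvd_pow_self p (by norm_num)) h
        rw [show p ^ 2 - (p ^ 2 - 1) = 1 by omega] at h1
        exact hp.one_lt.ne' (Nat.dvd_one.mp h1)
    rw [hd, Nat.factorization_mul (pow_ne_zero _ hp.pos.ne') hdne,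
      Nat.Prime.factorization_pow hp]
    simp [Nat.factorization_eq_zero_of_not_dvd hpd]
  refine ⟨Sylow.ofCard f.range (by rw [hcard_range, hfac]), ⟨MonoidHom.ofInjective hinj⟩⟩
end
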